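/- arXiv:2407.14641 — 3 statements merged into one kernel-verified Lean document; each statement's English description precedes it below -/
import Mathlib

section
/- There exists a constant C > 0 such that for every ε > 0 and every integer k ≥ 1, inf over b ∈ ℝ^k of ∫_ℝ (min_{1≤i≤k} |y − b_i|)·(ε/2)·e^{−ε|y|} dy ≤ C/(ε·k); i.e., the optimal expected error of approximating a Laplace-distributed point of scale 1/ε by the nearest of k well-chosen points is O(1/(εk)). -/
open MeasureTheory Real Filter Set

noncomputable section

lemma my_integrable_exp_neg_abs {c : ℝ} (hc : 0 < c) :
    Integrable (fun y : ℝ => Real.exp (-(c * |y|))) := by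
  have h1 : IntegrableOn (fun y : ℝ => Real.exp (-(c * |y|))) (Ioi 0) := by
    refine (exp_neg_integrableOn_Ioi 0 hc).congr_fun (fun x hx => ?_) measurableSet_Ioi
    rw [abs_of_pos hx]; simp only [neg_mul]
  have h1' : IntegrableOn (fun y : ℝ => Real.exp (-(c * |y|))) (Ici 0) :=
    Iff.mpr integrableOn_Ici_iff_integrableOn_Ioi h1
  have h2 : IntegrableOn (fun y : ℝ => Real.exp (-(c * |y|))) (Iic 0) := by
    rw [← Measure.map_neg_eq_self (volume : Measure ℝ)]
    have m : MeasurableEmbedding fun x : ℝ => -x := (Homeomorph.neg ℝ).measurableEmbedding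
    rw [m.integrableOn_map_iff]
    simp_rw [Function.comp_def, abs_neg, neg_preimage, neg_Iic, neg_zero]
    exact h1'
  have h3 := h2.union h1
  rwa [Iic_union_Ioi, integrableOn_univ] at h3

lemma my_integral_exp_neg_abs {c : ℝ} (hc : 0 < c) :
    ∫ y : ℝ, Real.exp (-(c * |y|)) = 2 / c := by
  rw [integral_comp_abs (f := fun x => Real.exp (-(c * x)))]
  have := integral_comp_mul_left_Ioi (fun u => Real.exp (-u)) 0 hc
  simp only [mul_zero] at this
  rw [this, integral_exp_neg_Ioi_zero, smul_eq_mul, mul_one]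
  rw [eq_div_iff hc.ne']
  field_simp

lemma keyA {ε : ℝ} (hε : 0 < ε) {m : ℕ} (hm : 1 ≤ m) {t : ℝ} (ht : 0 ≤ t) :
    ∃ j : ℕ, j < m ∧
      |t - 2 / ε * Real.log ((m : ℝ) / ((m : ℝ) - j))| ≤ 2 / (ε * m) * Real.exp (ε * t / 2) := by
  have hm0 : (0:ℝ) < m := by exact_mod_cast hm
  set E := Real.exp (ε * t / 2) with hE
  have hEpos : 0 < E := Real.exp_pos _
  have hE1 : 1 ≤ E := Real.one_le_exp (by positivity)
  have hEinv1 : E⁻¹ ≤ 1 := inv_le_one_of_one_le₀ hE1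
  have hEinv0 : 0 < E⁻¹ := inv_pos.mpr hEpos
  set x := (m:ℝ) * (1 - E⁻¹) with hx
  have hx0 : 0 ≤ x := mul_nonneg hm0.le (by linarith)
  have hxm : x < m := by nlinarith
  refine ⟨⌊x⌋₊, ?_, ?_⟩
  · exact_mod_cast (Nat.floor_lt hx0).mpr hxm
  · set j := ⌊x⌋₊ with hj
    have hjx : (j:ℝ) ≤ x := Nat.floor_le hx0
    have hxj1 : x < j + 1 := Nat.lt_floor_add_one x
    set D : ℝ := (m:ℝ) - j with hD
    have hDlb : (m:ℝ) * E⁻¹ ≤ D := by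
      have : x = m - m * E⁻¹ := by ring
      simp only [hD]; linarith [hjx, this ▸ hjx]
    have hD0 : 0 < D := lt_of_lt_of_le (by positivity) hDlb
    have hDub : D < (m:ℝ) * E⁻¹ + 1 := by
      have hx' : (m:ℝ) - m * E⁻¹ < j + 1 := by
        have : x = m - m * E⁻¹ := by ring
        linarith [this ▸ hxj1]
      simp only [hD]; linarith
    set L := Real.log ((m:ℝ) / D) with hL
    have hmD : (m:ℝ) / D ≤ E := by
      rw [div_le_iff₀ hD0]
      have h1 : E * ((m:ℝ) * E⁻¹) ≤ E * D := mul_le_mul_of_nonneg_left hDlb hEpos.le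
      have h2 : E * ((m:ℝ) * E⁻¹) = m := by field_simp
      calc (m:ℝ) = E * ((m:ℝ) * E⁻¹) := h2.symm
        _ ≤ E * D := h1
    have hL0 : 0 ≤ L := Real.log_nonneg (by
      rw [le_div_iff₀ hD0]
      have : (0:ℝ) ≤ (j:ℝ) := Nat.cast_nonneg j
      simp only [hD]; linarith)
    have hLle : L ≤ ε * t / 2 := by
      calc L ≤ Real.log E := Real.log_le_log (by positivity) hmD
        _ = ε * t / 2 := Real.log_exp _
    have hg_le : 2 / ε * L ≤ t := by
      have h2e : 0 < 2 / ε := by positivity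
      have := mul_le_mul_of_nonneg_left hLle h2e.le
      calc 2 / ε * L ≤ 2 / ε * (ε * t / 2) := this
        _ = t := by field_simp
    have hg0 : 0 ≤ 2 / ε * L := mul_nonneg (by positivity) hL0
    rw [abs_of_nonneg (by linarith)]
    -- t - (2/ε) L = (2/ε)(εt/2 - L) and εt/2 - L = log (E*D/m) ≤ E*D/m - 1 ≤ E/m
    have hlog : ε * t / 2 - L = Real.log (E * D / m) := by
      rw [hL, Real.log_div (by positivity) hD0.ne', Real.log_div (by positivity) hm0.ne',
        Real.log_mul hEpos.ne' hD0.ne', hE, Real.log_exp]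
      ring
    have hEDm : E * D / m - 1 ≤ E / m := by
      rw [div_sub_one hm0.ne', div_le_div_iff_of_pos_right hm0]
      have h1 : E * D < E * ((m:ℝ) * E⁻¹ + 1) := mul_lt_mul_of_pos_left hDub hEpos
      have h2 : E * ((m:ℝ) * E⁻¹ + 1) = (m:ℝ) + E := by field_simp
      have h3 : E * D < (m:ℝ) + E := h2 ▸ h1
      linarith
    have hlog_le : Real.log (E * D / m) ≤ E / m := by
      have h0 : 0 < E * D / m := by positivity
      calc Real.log (E * D / m) ≤ E * D / m - 1 := Real.log_le_sub_one_of_pos h0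
        _ ≤ E / m := hEDm
    have : ε * t / 2 - L ≤ E / m := hlog ▸ hlog_le
    calc t - 2 / ε * L = 2 / ε * (ε * t / 2 - L) := by field_simp
      _ ≤ 2 / ε * (E / m) := by
        exact mul_le_mul_of_nonneg_left this (by positivity)
      _ = 2 / (ε * m) * E := by ring

lemma exists_good_b {ε : ℝ} (hε : 0 < ε) {k : ℕ} (hk : 1 ≤ k) :
    ∃ b : Fin k → ℝ, ∀ y : ℝ,
      (⨅ i, |y - b i|) ≤ 4 / (ε * k) * Real.exp (ε * |y| / 2) := by
  haveI : Nonempty (Fin k) := Fin.pos_iff_nonempty.mp (by omega)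
  have hk0 : (0:ℝ) < k := by exact_mod_cast hk
  set p := (k+1)/2 with hp
  set q := k+1-p with hq
  have hp1 : 1 ≤ p := by omega
  have hq1 : 1 ≤ q := by omega
  have hpk : p ≤ k := by omega
  have hk2p : k ≤ 2*p := by omega
  have hk2q : k ≤ 2*q := by omega
  have hp0 : (0:ℝ) < p := by exact_mod_cast hp1
  have hq0 : (0:ℝ) < q := by exact_mod_cast hq1
  set b : Fin k → ℝ := fun i =>
    if (i:ℕ) < p then 2/ε * Real.log ((p:ℝ) / ((p:ℝ) - (i:ℕ)))
    else -(2/ε * Real.log ((q:ℝ) / ((q:ℝ) - (((i:ℕ) - p + 1 : ℕ) : ℝ)))) with hbdef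
  refine ⟨b, fun y => ?_⟩
  have hbdd : BddBelow (Set.range fun i : Fin k => |y - b i|) := by
    refine ⟨0, ?_⟩; rintro _ ⟨i, rfl⟩; exact abs_nonneg _
  have hmono : ∀ m : ℕ, 1 ≤ m → k ≤ 2*m →
      2 / (ε * m) * Real.exp (ε * |y| / 2) ≤ 4 / (ε * k) * Real.exp (ε * |y| / 2) := by
    intro m hm hkm
    have hm0 : (0:ℝ) < m := by exact_mod_cast hm
    have hkm' : (k:ℝ) ≤ 2*m := by exact_mod_cast hkm
    refine mul_le_mul_of_nonneg_right ?_ (Real.exp_pos _).le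
    rw [div_le_div_iff₀ (by positivity) (by positivity)]
    nlinarith
  rcases le_or_gt 0 y with hy | hy
  · obtain ⟨j, hj, hbound⟩ := keyA hε hp1 hy
    set i : Fin k := ⟨j, lt_of_lt_of_le hj hpk⟩ with hi
    have hbi : b i = 2/ε * Real.log ((p:ℝ) / ((p:ℝ) - j)) := by
      simp only [hbdef, hi, if_pos hj]
    calc (⨅ i, |y - b i|) ≤ |y - b i| := ciInf_le hbdd i
      _ ≤ 2 / (ε * p) * Real.exp (ε * y / 2) := by rw [hbi]; exact hbound
      _ ≤ 4 / (ε * k) * Real.exp (ε * |y| / 2) := by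
          rw [abs_of_nonneg hy] at hmono ⊢
          exact hmono p hp1 hk2p
  · have ht : 0 ≤ -y := by linarith
    obtain ⟨j, hj, hbound⟩ := keyA hε hq1 ht
    have habs : |y| = -y := abs_of_neg hy
    rcases Nat.eq_zero_or_pos j with hj0 | hj1
    · subst hj0
      set i : Fin k := ⟨0, by omega⟩ with hi
      have hbi : b i = 0 := by
        simp only [hbdef, hi]
        rw [if_pos (by exact hp1)]
        simp only [Nat.cast_zero, sub_zero, div_self hp0.ne', Real.log_one, mul_zero]
      have hb0 : 2/ε * Real.log ((q:ℝ) / ((q:ℝ) - (0:ℕ))) = 0 := by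
        simp only [Nat.cast_zero, sub_zero, div_self hq0.ne', Real.log_one, mul_zero]
      calc (⨅ i, |y - b i|) ≤ |y - b i| := ciInf_le hbdd i
        _ = |-y - 2/ε * Real.log ((q:ℝ) / ((q:ℝ) - (0:ℕ)))| := by
            rw [hbi, hb0, sub_zero, sub_zero, abs_neg]
        _ ≤ 2 / (ε * q) * Real.exp (ε * (-y) / 2) := hbound
        _ ≤ 4 / (ε * k) * Real.exp (ε * |y| / 2) := by
            rw [habs] at hmono ⊢
            exact hmono q hq1 hk2q
    · set i : Fin k := ⟨p + (j-1), by omega⟩ with hi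
      have hnot : ¬ ((i:ℕ) < p) := by simp only [hi]; omega
      have hidx : ((i:ℕ) - p + 1 : ℕ) = j := by simp only [hi]; omega
      have hbi : b i = -(2/ε * Real.log ((q:ℝ) / ((q:ℝ) - j))) := by
        simp only [hbdef, if_neg hnot, hidx]
      calc (⨅ i, |y - b i|) ≤ |y - b i| := ciInf_le hbdd i
        _ = |-y - 2/ε * Real.log ((q:ℝ) / ((q:ℝ) - j))| := by
            rw [hbi, sub_neg_eq_add, ← abs_neg]; ring_nf
        _ ≤ 2 / (ε * q) * Real.exp (ε * (-y) / 2) := hbound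
        _ ≤ 4 / (ε * k) * Real.exp (ε * |y| / 2) := by
            rw [habs] at hmono ⊢
            exact hmono q hq1 hk2q

/-- There is a universal constant `C > 0` such that for all `ε > 0` and every `k ≥ 1`,
the optimal expected error of approximating a Laplace-distributed point of scale `1/ε`
by the nearest of `k` well-chosen points is at most `C/(ε·k)`. -/
theorem laplace_k_point_error :
    ∃ C : ℝ, 0 < C ∧ ∀ ε : ℝ, 0 < ε → ∀ k : ℕ, 1 ≤ k →
      (⨅ b : Fin k → ℝ,
        ∫ y : ℝ, (⨅ i, |y - b i|) * ((ε / 2) * Real.exp (-(ε * |y|))))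
        ≤ C / (ε * k) := by
  refine ⟨8, by norm_num, fun ε hε k hk => ?_⟩
  haveI : Nonempty (Fin k) := Fin.pos_iff_nonempty.mp (by omega)
  have hk0 : (0:ℝ) < k := by exact_mod_cast hk
  obtain ⟨b, hb⟩ := exists_good_b hε hk
  have hbdd : BddBelow (Set.range fun b : Fin k → ℝ =>
      ∫ y : ℝ, (⨅ i, |y - b i|) * ((ε / 2) * Real.exp (-(ε * |y|)))) := by
    refine ⟨0, ?_⟩; rintro _ ⟨b', rfl⟩
    exact integral_nonneg fun y =>
      mul_nonneg (Real.iInf_nonneg fun i => abs_nonneg _) (by positivity)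
  refine le_trans (ciInf_le hbdd b) ?_
  have hg_int : Integrable (fun y : ℝ => 2/(k:ℝ) * Real.exp (-(ε/2 * |y|))) :=
    (my_integrable_exp_neg_abs (by positivity : (0:ℝ) < ε/2)).const_mul _
  have hle : (∫ y : ℝ, (⨅ i, |y - b i|) * ((ε / 2) * Real.exp (-(ε * |y|))))
      ≤ ∫ y : ℝ, 2/(k:ℝ) * Real.exp (-(ε/2 * |y|)) := by
    refine integral_mono_of_nonneg (Eventually.of_forall fun y =>
      mul_nonneg (Real.iInf_nonneg fun i => abs_nonneg _) (by positivity)) hg_int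
      (Eventually.of_forall fun y => ?_)
    have h2 : (⨅ i, |y - b i|) * ((ε / 2) * Real.exp (-(ε * |y|)))
        ≤ (4 / (ε * k) * Real.exp (ε * |y| / 2)) * ((ε / 2) * Real.exp (-(ε * |y|))) :=
      mul_le_mul_of_nonneg_right (hb y) (by positivity)
    refine h2.trans_eq ?_
    have he : Real.exp (ε * |y| / 2) * Real.exp (-(ε * |y|)) = Real.exp (-(ε/2 * |y|)) := by
      rw [← Real.exp_add]; congr 1; ring
    calc (4 / (ε * k) * Real.exp (ε * |y| / 2)) * ((ε / 2) * Real.exp (-(ε * |y|)))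
        = (4 / (ε * k) * (ε / 2)) * (Real.exp (ε * |y| / 2) * Real.exp (-(ε * |y|))) := by ring
      _ = 2/(k:ℝ) * Real.exp (-(ε/2 * |y|)) := by
          rw [he]; congr 1; field_simp; ring
  refine hle.trans ?_
  rw [integral_const_mul, my_integral_exp_neg_abs (by positivity : (0:ℝ) < ε/2)]
  have hfin : 2 / (k:ℝ) * (2 / (ε / 2)) = 8 / (ε * k) := by
    field_simp
    ring
  exact hfin.le
end
end

section
/- Let ε > 0, η > 0, let (P_u)_{u∈ℝ} be a family of Borel probability measures on ℝ^k satisfying ε-geographic differential privacy, and let h : [0,∞) → [0,∞) be continuous, increasing, with h(0) = 0. Let P^η_u be the probability measure on ℝ^k with density ρ(u,a) = P_u(B_∞(a,η))/(2η)^k. Then for every u ∈ ℝ: ∫_{ℝ^k} (min_{1≤i≤k} h(max(|u − a_i| − η, 0))) dP_u(a) ≤ ∫_{ℝ^k} (min_{1≤i≤k} h(|u − a_i|)) dP^η_u(a) ≤ ∫_{ℝ^k} (min_{1≤i≤k} h(|u − a_i| + η)) dP_u(a). -/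
open MeasureTheory Real Filter Set
open scoped ENNReal

noncomputable section

/-- `ε`-geographic differential privacy for a family of measures on `ℝ^k`. -/
def GeoDP (ε : ℝ) {k : ℕ} (P : ℝ → Measure (Fin k → ℝ)) : Prop :=
  ∀ u₁ u₂ : ℝ, ∀ S : Set (Fin k → ℝ), MeasurableSet S →
    P u₁ S ≤ ENNReal.ofReal (Real.exp (ε * |u₁ - u₂|)) * P u₂ S

/-- The mollified density `ρ(u,a) = P_u(B_∞(a,η)) / (2η)^k`. -/
def mollified {k : ℕ} (η : ℝ) (P : ℝ → Measure (Fin k → ℝ))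
    (u : ℝ) (a : Fin k → ℝ) : ℝ :=
  (P u (Metric.ball a η)).toReal / (2 * η) ^ k

/-- The mollified measure `P^η_u`, with density `ρ(u,·)` w.r.t. Lebesgue measure. -/
def mollifiedMeasure {k : ℕ} (η : ℝ) (P : ℝ → Measure (Fin k → ℝ))
    (u : ℝ) : Measure (Fin k → ℝ) :=
  volume.withDensity fun a => ENNReal.ofReal (mollified η P u a)

lemma fin_ciInf_mono {k : ℕ} {f g : Fin k → ℝ} (hf : ∀ i, 0 ≤ f i)
    (hfg : ∀ i, f i ≤ g i) : ⨅ i, f i ≤ ⨅ i, g i := by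
  rcases isEmpty_or_nonempty (Fin k) with hk | hk
  · simp
  · exact ciInf_mono ⟨0, by rintro x ⟨i, rfl⟩; exact hf i⟩ hfg

/-- The cost of the mollified measure is sandwiched between the costs of `P_u` with
the disutility argument shifted down and up by `η`. -/
theorem mollified_cost_sandwich (ε η : ℝ) (hε : 0 < ε) (hη : 0 < η) (k : ℕ)
    (P : ℝ → Measure (Fin k → ℝ)) (hprob : ∀ u, IsProbabilityMeasure (P u))
    (hDP : GeoDP ε P)
    (h : ℝ → ℝ) (hcont : ContinuousOn h (Set.Ici 0))
    (hmono : StrictMonoOn h (Set.Ici 0)) (hnonneg : ∀ x, 0 ≤ x → 0 ≤ h x)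
    (h0 : h 0 = 0) :
    ∀ u : ℝ,
      (∫⁻ a, ENNReal.ofReal (⨅ i, h (max (|u - a i| - η) 0)) ∂(P u))
          ≤ (∫⁻ a, ENNReal.ofReal (⨅ i, h (|u - a i|)) ∂(mollifiedMeasure η P u)) ∧
      (∫⁻ a, ENNReal.ofReal (⨅ i, h (|u - a i|)) ∂(mollifiedMeasure η P u))
          ≤ ∫⁻ a, ENNReal.ofReal (⨅ i, h (|u - a i| + η)) ∂(P u) := by
  intro u
  haveI := hprob u
  set c : ℝ≥0∞ := ENNReal.ofReal ((2 * η) ^ k) with hc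
  have h2η : (0:ℝ) < (2 * η) ^ k := by positivity
  have hc0 : c ≠ 0 := by simp [hc, ENNReal.ofReal_eq_zero, not_le, h2η]
  have hctop : c ≠ ⊤ := ENNReal.ofReal_ne_top
  -- continuity of h ∘ abs
  have habs : Continuous fun x : ℝ => h |x| :=
    hcont.comp_continuous continuous_abs fun x => abs_nonneg x
  set g : (Fin k → ℝ) → ℝ≥0∞ := fun a => ENNReal.ofReal (⨅ i, h (|u - a i|)) with hg
  have hg_meas : Measurable g := by
    apply Measurable.ennreal_ofReal
    exact Measurable.iInf fun i =>
      (habs.comp (continuous_const.sub (continuous_apply i))).measurable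
  -- measurability of the density
  have hball_eq : ∀ a : Fin k → ℝ, Metric.ball a η =
      Prod.mk a ⁻¹' {p : (Fin k → ℝ) × (Fin k → ℝ) | dist p.2 p.1 < η} := by
    intro a; ext b; simp [Metric.mem_ball, dist_comm]
  have hSmeas : MeasurableSet {p : (Fin k → ℝ) × (Fin k → ℝ) | dist p.2 p.1 < η} :=
    measurableSet_lt (continuous_snd.dist continuous_fst).measurable measurable_const
  have hmeas_ball : Measurable fun a : Fin k → ℝ => P u (Metric.ball a η) := by
    simp_rw [hball_eq]
    exact measurable_measure_prodMk_left hSmeas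
  have hρ_meas : Measurable fun a => ENNReal.ofReal (mollified η P u a) := by
    unfold mollified
    exact (hmeas_ball.ennreal_toReal.div_const _).ennreal_ofReal
  -- ofReal density = measure of ball / c
  have hρ_eq : ∀ a, ENNReal.ofReal (mollified η P u a) = P u (Metric.ball a η) / c := by
    intro a
    rw [mollified, ENNReal.ofReal_div_of_pos h2η, ENNReal.ofReal_toReal (measure_ne_top _ _)]
  -- volume of the ball
  have hvol : ∀ b : Fin k → ℝ, volume (Metric.ball b η) = c := by
    intro b
    rw [ball_pi b hη, volume_pi_pi]
    simp only [Real.volume_ball]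
    rw [Finset.prod_const, Finset.card_univ, Fintype.card_fin,
      ← ENNReal.ofReal_pow (by positivity)]
  -- the key Fubini identity
  have key : ∫⁻ a, g a ∂(mollifiedMeasure η P u)
      = ∫⁻ b, (∫⁻ a in Metric.ball b η, g a) / c ∂(P u) := by
    rw [mollifiedMeasure, lintegral_withDensity_eq_lintegral_mul _ hρ_meas hg_meas]
    have h1 : ∀ a, ((fun a => ENNReal.ofReal (mollified η P u a)) * g) a
        = (P u (Metric.ball a η) * g a) * c⁻¹ := by
      intro a
      simp only [Pi.mul_apply, hρ_eq a, div_eq_mul_inv]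
      ring
    simp_rw [h1]
    rw [lintegral_mul_const' _ _ (by simp [hc0])]
    set F : (Fin k → ℝ) → (Fin k → ℝ) → ℝ≥0∞ := fun a b =>
      Set.indicator {p : (Fin k → ℝ) × (Fin k → ℝ) | dist p.2 p.1 < η}
        (fun p => g p.1) (a, b) with hF
    have hF_meas : AEMeasurable (Function.uncurry F) (volume.prod (P u)) := by
      apply Measurable.aemeasurable
      have : Function.uncurry F = Set.indicator
          {p : (Fin k → ℝ) × (Fin k → ℝ) | dist p.2 p.1 < η} (fun p => g p.1) := rfl
      rw [this]
      exact (hg_meas.comp measurable_fst).indicator hSmeas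
    have hinner1 : ∀ a, P u (Metric.ball a η) * g a = ∫⁻ b, F a b ∂(P u) := by
      intro a
      have : ∀ b, F a b = Set.indicator (Metric.ball a η) (fun _ => g a) b := by
        intro b
        simp only [hF, Set.indicator, Set.mem_setOf_eq, Metric.mem_ball, dist_comm b a]
      simp_rw [this]
      rw [lintegral_indicator Metric.isOpen_ball.measurableSet, setLIntegral_const,
        mul_comm]
    have hinner2 : ∀ b, ∫⁻ a, F a b ∂volume = ∫⁻ a in Metric.ball b η, g a := by
      intro b
      have : ∀ a, F a b = Set.indicator (Metric.ball b η) g a := by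
        intro a
        simp only [hF, Set.indicator, Set.mem_setOf_eq, Metric.mem_ball, dist_comm b a]
      simp_rw [this]
      rw [lintegral_indicator Metric.isOpen_ball.measurableSet]
    simp_rw [hinner1]
    rw [lintegral_lintegral_swap hF_meas]
    simp_rw [hinner2, div_eq_mul_inv]
    rw [lintegral_mul_const' _ _ (by simp [hc0])]
  rw [key]
  -- pointwise coordinate bounds
  have coord : ∀ b a : Fin k → ℝ, a ∈ Metric.ball b η → ∀ i : Fin k,
      max (|u - b i| - η) 0 ≤ |u - a i| ∧ |u - a i| ≤ |u - b i| + η := by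
    intro b a ha i
    have hd : |a i - b i| < η := by
      have := dist_le_pi_dist a b i
      rw [Real.dist_eq] at this
      exact lt_of_le_of_lt this (Metric.mem_ball.mp ha)
    constructor
    · refine max_le ?_ (abs_nonneg _)
      have : |u - b i| ≤ |u - a i| + |a i - b i| := by
        calc |u - b i| = |(u - a i) + (a i - b i)| := by ring_nf
          _ ≤ |u - a i| + |a i - b i| := abs_add_le _ _
      linarith
    · have : |u - a i| ≤ |u - b i| + |b i - a i| := by
        calc |u - a i| = |(u - b i) + (b i - a i)| := by ring_nf
          _ ≤ |u - b i| + |b i - a i| := abs_add_le _ _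
      have h2 : |b i - a i| ≤ η := by rw [abs_sub_comm]; exact hd.le
      linarith
  have hmono' := hmono.monotoneOn
  constructor
  · -- lower bound
    refine lintegral_mono fun b => ?_
    rw [ENNReal.le_div_iff_mul_le (Or.inl hc0) (Or.inl hctop)]
    calc ENNReal.ofReal (⨅ i, h (max (|u - b i| - η) 0)) * c
        = ∫⁻ _ in Metric.ball b η,
            ENNReal.ofReal (⨅ i, h (max (|u - b i| - η) 0)) ∂volume := by
          rw [setLIntegral_const, hvol]
      _ ≤ ∫⁻ a in Metric.ball b η, g a ∂volume := by
          refine setLIntegral_mono' Metric.isOpen_ball.measurableSet fun a ha => ?_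
          apply ENNReal.ofReal_le_ofReal
          refine fin_ciInf_mono (fun i => hnonneg _ (le_max_right _ _)) fun i => ?_
          exact hmono' (Set.mem_Ici.mpr (le_max_right _ _)) (Set.mem_Ici.mpr (abs_nonneg _)) ((coord b a ha i).1)
  · -- upper bound
    refine lintegral_mono fun b => ?_
    rw [ENNReal.div_le_iff hc0 hctop]
    calc ∫⁻ a in Metric.ball b η, g a ∂volume
        ≤ ∫⁻ _ in Metric.ball b η,
            ENNReal.ofReal (⨅ i, h (|u - b i| + η)) ∂volume := by
          refine setLIntegral_mono' Metric.isOpen_ball.measurableSet fun a ha => ?_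
          apply ENNReal.ofReal_le_ofReal
          refine fin_ciInf_mono (fun i => hnonneg _ (abs_nonneg _)) fun i => ?_
          exact hmono' (Set.mem_Ici.mpr (abs_nonneg _)) (Set.mem_Ici.mpr (by positivity)) ((coord b a ha i).2)
      _ = ENNReal.ofReal (⨅ i, h (|u - b i| + η)) * c := by
          rw [setLIntegral_const, hvol]
end
end

section
/- There exists a universal constant C > 0 such that the following holds. Let ε > 0, let K ≥ 2 be an integer, and let X be a nonnegative real random variable with a continuously differentiable, log-concave probability density f on [0,∞) and with E[X] = 1/ε. Let F(x) = P(X ≥ x), set a_0 = 0 and a_i = F^{-1}(1 − i/K) for i = 1, …, K−1, and let S = {−a_{K−1}, …, −a_1, 0, a_1, …, a_{K−1}}. Then E[ min_{v∈S} |v − X| ] ≤ C·(log K)/(K·ε). -/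
open MeasureTheory Real Filter Set

noncomputable section

namespace MHRAux

/-- Two-point inequality from log-concavity. -/
lemma two_point (f : ℝ → ℝ) (hf0 : ∀ x, 0 ≤ f x)
    (hconc : ConcaveOn ℝ {x : ℝ | 0 ≤ x ∧ 0 < f x} (fun x => Real.log (f x)))
    {p q r s : ℝ} (hp : 0 ≤ p) (hpr : p ≤ r) (hps : p ≤ s)
    (hrq : r ≤ q) (hsq : s ≤ q) (hsum : p + q = r + s) :
    f p * f q ≤ f r * f s := by
  rcases (hf0 p).eq_or_lt with hfp | hfp
  · rw [← hfp]; simpa using mul_nonneg (hf0 r) (hf0 s)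
  rcases (hf0 q).eq_or_lt with hfq | hfq
  · rw [← hfq, mul_zero]; exact mul_nonneg (hf0 r) (hf0 s)
  have hpq : p ≤ q := hpr.trans hrq
  rcases hpq.eq_or_lt with hpq' | hpq'
  · have hr : r = p := le_antisymm (hpq' ▸ hrq) hpr
    have hs : s = p := le_antisymm (hpq' ▸ hsq) hps
    rw [hr, hs, ← hpq']
  have hq0 : 0 ≤ q := hp.trans hpq
  have hpS : p ∈ {x : ℝ | 0 ≤ x ∧ 0 < f x} := ⟨hp, hfp⟩
  have hqS : q ∈ {x : ℝ | 0 ≤ x ∧ 0 < f x} := ⟨hq0, hfq⟩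
  have hd : 0 < q - p := sub_pos.2 hpq'
  set lam := (q - r) / (q - p) with hlam_def
  set mub := (r - p) / (q - p) with hmub_def
  clear_value lam mub
  have hlam : 0 ≤ lam := by
    rw [hlam_def]; exact div_nonneg (by linarith) hd.le
  have hmub : 0 ≤ mub := by
    rw [hmub_def]; exact div_nonneg (by linarith) hd.le
  have hlm : lam + mub = 1 := by
    rw [hlam_def, hmub_def, ← add_div, div_eq_one_iff_eq hd.ne']; ring
  have hr_eq : lam • p + mub • q = r := by
    simp only [smul_eq_mul, hlam_def, hmub_def]
    field_simp
    ring
  have hs_eq : mub • p + lam • q = s := by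
    simp only [smul_eq_mul, hlam_def, hmub_def]
    have : s = p + q - r := by linarith
    field_simp
    nlinarith [this]
  have h1 := hconc.2 hpS hqS hlam hmub hlm
  have h2 := hconc.2 hpS hqS hmub hlam (by linarith)
  rw [hr_eq] at h1
  rw [hs_eq] at h2
  have hrS : r ∈ {x : ℝ | 0 ≤ x ∧ 0 < f x} := by
    have := hconc.1 hpS hqS hlam hmub hlm
    rwa [hr_eq] at this
  have hsS : s ∈ {x : ℝ | 0 ≤ x ∧ 0 < f x} := by
    have := hconc.1 hpS hqS hmub hlam (by linarith)
    rwa [hs_eq] at this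
  have hfr : 0 < f r := hrS.2
  have hfs : 0 < f s := hsS.2
  have key : Real.log (f p) + Real.log (f q) ≤ Real.log (f r) + Real.log (f s) := by
    have e1 : Real.log (f p) + Real.log (f q)
        = (lam • Real.log (f p) + mub • Real.log (f q))
          + (mub • Real.log (f p) + lam • Real.log (f q)) := by
      simp only [smul_eq_mul]
      linear_combination (-(Real.log (f p) + Real.log (f q))) * hlm
    rw [e1]
    exact add_le_add h1 h2
  calc f p * f q = Real.exp (Real.log (f p) + Real.log (f q)) := by
        rw [Real.exp_add, Real.exp_log hfp, Real.exp_log hfq]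
    _ ≤ Real.exp (Real.log (f r) + Real.log (f s)) := Real.exp_le_exp.2 key
    _ = f r * f s := by rw [Real.exp_add, Real.exp_log hfr, Real.exp_log hfs]

/-- Pointwise symmetrized inequality used for the mean-residual-life bound. -/
lemma swap_pt (f : ℝ → ℝ) (hf0 : ∀ x, 0 ≤ f x)
    (hconc : ConcaveOn ℝ {x : ℝ | 0 ≤ x ∧ 0 < f x} (fun x => Real.log (f x)))
    {a u y : ℝ} (ha : 0 ≤ a) (hu : 0 ≤ u) (hy : 0 ≤ y) :
    u * f (u + a) * f y + y * f (y + a) * f u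
      ≤ y * f (u + a) * f y + u * f (y + a) * f u := by
  rcases le_total y u with h | h
  · have key : f y * f (u + a) ≤ f u * f (y + a) :=
      two_point f hf0 hconc hy h (by linarith) (by linarith) (by linarith) (by ring)
    nlinarith [key, sub_nonneg.2 h]
  · have key : f u * f (y + a) ≤ f y * f (u + a) :=
      two_point f hf0 hconc hu h (by linarith) (by linarith) (by linarith) (by ring)
    nlinarith [key, sub_nonneg.2 h]

/-- Chebyshev-type product inequality via symmetrization on `(Ici 0) ×ˢ (Ici 0)`. -/
lemma chebyshev_prod (g h : ℝ → ℝ)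
    (hgi : IntegrableOn g (Ici (0:ℝ))) (hhi : IntegrableOn h (Ici (0:ℝ)))
    (hugi : IntegrableOn (fun u => u * g u) (Ici (0:ℝ)))
    (huhi : IntegrableOn (fun u => u * h u) (Ici (0:ℝ)))
    (hpt : ∀ u ∈ Ici (0:ℝ), ∀ y ∈ Ici (0:ℝ),
      u * g u * h y + y * g y * h u ≤ y * g u * h y + u * g y * h u) :
    (∫ u in Ici (0:ℝ), u * g u) * (∫ y in Ici (0:ℝ), h y)
      ≤ (∫ u in Ici (0:ℝ), g u) * (∫ y in Ici (0:ℝ), y * h y) := by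
  set μ := volume.restrict (Ici (0:ℝ)) with hμ
  have i1 : Integrable (fun z : ℝ × ℝ => (z.1 * g z.1) * h z.2) (μ.prod μ) :=
    hugi.mul_prod hhi
  have i2 : Integrable (fun z : ℝ × ℝ => h z.1 * (z.2 * g z.2)) (μ.prod μ) :=
    hhi.mul_prod hugi
  have i3 : Integrable (fun z : ℝ × ℝ => g z.1 * (z.2 * h z.2)) (μ.prod μ) :=
    hgi.mul_prod huhi
  have i4 : Integrable (fun z : ℝ × ℝ => (z.1 * h z.1) * g z.2) (μ.prod μ) :=
    huhi.mul_prod hgi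
  have hae : ∀ᵐ z ∂(μ.prod μ), z ∈ (Ici (0:ℝ)) ×ˢ (Ici (0:ℝ)) := by
    rw [hμ, Measure.prod_restrict]
    exact ae_restrict_mem (measurableSet_Ici.prod measurableSet_Ici)
  have mono : ∫ z : ℝ × ℝ, ((z.1 * g z.1) * h z.2 + h z.1 * (z.2 * g z.2)) ∂(μ.prod μ)
      ≤ ∫ z : ℝ × ℝ, (g z.1 * (z.2 * h z.2) + (z.1 * h z.1) * g z.2) ∂(μ.prod μ) := by
    refine integral_mono_ae (i1.add i2) (i3.add i4) ?_
    filter_upwards [hae] with z hz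
    have hp := hpt z.1 hz.1 z.2 hz.2
    calc (z.1 * g z.1) * h z.2 + h z.1 * (z.2 * g z.2)
        = z.1 * g z.1 * h z.2 + z.2 * g z.2 * h z.1 := by ring
      _ ≤ z.2 * g z.1 * h z.2 + z.1 * g z.2 * h z.1 := hp
      _ = g z.1 * (z.2 * h z.2) + (z.1 * h z.1) * g z.2 := by ring
  rw [integral_add i1 i2, integral_add i3 i4] at mono
  have e1 : ∫ z : ℝ × ℝ, (z.1 * g z.1) * h z.2 ∂(μ.prod μ)
      = (∫ u in Ici (0:ℝ), u * g u) * (∫ y in Ici (0:ℝ), h y) := by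
    exact integral_prod_mul (fun u => u * g u) h
  have e2 : ∫ z : ℝ × ℝ, h z.1 * (z.2 * g z.2) ∂(μ.prod μ)
      = (∫ y in Ici (0:ℝ), h y) * (∫ u in Ici (0:ℝ), u * g u) := by
    exact integral_prod_mul h (fun y => y * g y)
  have e3 : ∫ z : ℝ × ℝ, g z.1 * (z.2 * h z.2) ∂(μ.prod μ)
      = (∫ u in Ici (0:ℝ), g u) * (∫ y in Ici (0:ℝ), y * h y) := by
    exact integral_prod_mul g (fun y => y * h y)
  have e4 : ∫ z : ℝ × ℝ, (z.1 * h z.1) * g z.2 ∂(μ.prod μ)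
      = (∫ u in Ici (0:ℝ), u * h u) * (∫ y in Ici (0:ℝ), g y) := by
    exact integral_prod_mul (fun u => u * h u) g
  rw [e1, e2, e3, e4] at mono
  have c1 : (∫ y in Ici (0:ℝ), h y) * (∫ u in Ici (0:ℝ), u * g u)
      = (∫ u in Ici (0:ℝ), u * g u) * (∫ y in Ici (0:ℝ), h y) := mul_comm _ _
  have c2 : (∫ u in Ici (0:ℝ), u * h u) * (∫ y in Ici (0:ℝ), g y)
      = (∫ u in Ici (0:ℝ), g u) * (∫ y in Ici (0:ℝ), y * h y) := mul_comm _ _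
  linarith

lemma indicator_shift (f : ℝ → ℝ) (a : ℝ) :
    (fun u => (Ici a).indicator f (u + a)) = (Ici (0:ℝ)).indicator (fun u => f (u + a)) := by
  funext u
  by_cases hu : (0:ℝ) ≤ u
  · rw [Set.indicator_of_mem (show u ∈ Ici (0:ℝ) from hu),
      Set.indicator_of_mem (show u + a ∈ Ici a by simpa using hu)]
  · rw [Set.indicator_of_notMem (show u ∉ Ici (0:ℝ) from hu), Set.indicator_of_notMem]
    simpa using hu

lemma shift_Ici (f : ℝ → ℝ) (a : ℝ) :
    ∫ x in Ici a, f x = ∫ u in Ici (0:ℝ), f (u + a) := by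
  rw [← integral_indicator measurableSet_Ici, ← integral_indicator measurableSet_Ici,
    ← integral_add_right_eq_self (fun x => (Ici a).indicator f x) a]
  simp_rw [indicator_shift f a]

lemma shift_Ici_integrableOn {f : ℝ → ℝ} {a : ℝ} (h : IntegrableOn f (Ici a)) :
    IntegrableOn (fun u => f (u + a)) (Ici (0:ℝ)) := by
  rw [← integrable_indicator_iff measurableSet_Ici] at h ⊢
  have := h.comp_add_right a
  rwa [indicator_shift f a] at this

end MHRAux

open MHRAux

/-- There is a universal constant `C > 0` such that for any `ε > 0`, any `K ≥ 2`, and any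
nonnegative random variable with continuously differentiable log-concave density `f` on
`[0,∞)` and mean `1/ε`, the expected distance to the nearest of the `2K−1` points
`S = {−a_{K−1},…,−a_1,0,a_1,…,a_{K−1}}`, where `F(a_i) = 1 − i/K` with `F` the survival
function, is at most `C·(log K)/(K·ε)`. -/
theorem mhr_quantile_error :
    ∃ C : ℝ, 0 < C ∧
      ∀ (ε : ℝ), 0 < ε → ∀ (K : ℕ), 2 ≤ K →
      ∀ f : ℝ → ℝ,
        (∀ x, 0 ≤ f x) →
        (∀ x < (0 : ℝ), f x = 0) →
        ContDiffOn ℝ 1 f (Set.Ici 0) →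
        ConcaveOn ℝ {x : ℝ | 0 ≤ x ∧ 0 < f x} (fun x => Real.log (f x)) →
        (∫ x in Set.Ici (0 : ℝ), f x) = 1 →
        (∫ x in Set.Ici (0 : ℝ), x * f x) = 1 / ε →
      ∀ a : ℕ → ℝ,
        a 0 = 0 →
        (∀ i : ℕ, 1 ≤ i → i ≤ K - 1 →
          0 ≤ a i ∧ (∫ x in Set.Ici (a i), f x) = 1 - (i : ℝ) / K) →
        (∫ x in Set.Ici (0 : ℝ),
            (⨅ i : Fin K, min |a i - x| |a i + x|) * f x)
          ≤ C * Real.log K / (K * ε) := by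
  refine ⟨8, by norm_num, ?_⟩
  intro ε hε K hK f hf0 hfneg hfC1 hconc hF0 hmean a ha0 haq
  have hKpos : (0:ℝ) < (K:ℝ) := by exact_mod_cast (by omega : 0 < K)
  have hK2 : (2:ℝ) ≤ (K:ℝ) := by exact_mod_cast hK
  set μ : ℝ := ∫ x in Ici (0:ℝ), x * f x with hμ_def
  have hμε : μ = 1 / ε := hmean
  have hμpos : 0 < μ := by rw [hμε]; positivity
  -- integrability of f and x * f
  have hfint : IntegrableOn f (Ici (0:ℝ)) := by
    by_contra h
    rw [integral_undef h] at hF0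
    norm_num at hF0
  have hxfint : IntegrableOn (fun x => x * f x) (Ici (0:ℝ)) := by
    by_contra h
    have h0 : μ = 0 := integral_undef h
    rw [h0] at hμε
    have hp : (0:ℝ) < 1 / ε := by positivity
    rw [← hμε] at hp
    norm_num at hp
  -- the survival function
  set F : ℝ → ℝ := fun t => ∫ x in Ici t, f x with hF_def
  have hFint : ∀ {t : ℝ}, 0 ≤ t → IntegrableOn f (Ici t) :=
    fun ht => hfint.mono_set (Ici_subset_Ici.2 ht)
  have hFmono : ∀ {c b : ℝ}, 0 ≤ c → c ≤ b → F b ≤ F c := by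
    intro c b hc hcb
    exact setIntegral_mono_set (hFint hc) (Filter.Eventually.of_forall (fun x => hf0 x))
      (HasSubset.Subset.eventuallyLE (Ici_subset_Ici.2 hcb))
  have hxti : ∀ {t : ℝ}, 0 ≤ t → IntegrableOn (fun x => (x - t) * f x) (Ici t) := by
    intro t ht
    have hsub : Ici t ⊆ Ici (0:ℝ) := Ici_subset_Ici.2 ht
    have h1 : IntegrableOn (fun x => x * f x - t * f x) (Ici t) :=
      (hxfint.mono_set hsub).sub ((hfint.mono_set hsub).const_mul t)
    have e : (fun x => (x - t) * f x) = fun x => x * f x - t * f x := by funext x; ring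
    rwa [e]
  -- mean residual life bound
  have hmrl : ∀ {t : ℝ}, 0 ≤ t → ∫ x in Ici t, (x - t) * f x ≤ F t * μ := by
    intro t ht
    have hsub : Ici t ⊆ Ici (0:ℝ) := Ici_subset_Ici.2 ht
    have hgi : IntegrableOn (fun u => f (u + t)) (Ici (0:ℝ)) :=
      shift_Ici_integrableOn (hfint.mono_set hsub)
    have hugi : IntegrableOn (fun u => u * f (u + t)) (Ici (0:ℝ)) := by
      have h2 := shift_Ici_integrableOn (hxti ht)
      have e : (fun u => ((u + t) - t) * f (u + t)) = fun u => u * f (u + t) := by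
        funext u; ring_nf
      rwa [e] at h2
    have key := chebyshev_prod (fun u => f (u + t)) f hgi hfint hugi hxfint
      (fun u hu y hy => swap_pt f hf0 hconc ht hu hy)
    have t1 : ∫ u in Ici (0:ℝ), u * f (u + t) = ∫ x in Ici t, (x - t) * f x := by
      rw [shift_Ici (fun x => (x - t) * f x) t]
      congr 1
      funext u
      ring_nf
    have t2 : ∫ u in Ici (0:ℝ), f (u + t) = F t := (shift_Ici f t).symm
    rw [t1, t2, hF0, mul_one] at key
    exact key
  -- geometric decay of F
  have hstep : ∀ {t : ℝ}, 0 ≤ t → F (t + 2 * μ) ≤ F t / 2 := by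
    intro t ht
    have ht2 : (0:ℝ) ≤ t + 2 * μ := by linarith
    have hsub : Ici (t + 2 * μ) ⊆ Ici t := Ici_subset_Ici.2 (by linarith)
    have h1 : (2 * μ) * F (t + 2 * μ) ≤ ∫ x in Ici (t + 2 * μ), (x - t) * f x := by
      rw [show (2 * μ) * F (t + 2 * μ)
          = ∫ x in Ici (t + 2 * μ), (2 * μ) * f x from (integral_const_mul _ _).symm]
      refine setIntegral_mono_on ((hFint ht2).const_mul _)
        ((hxti ht).mono_set hsub) measurableSet_Ici ?_
      intro x hx
      have hx' : t + 2 * μ ≤ x := hx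
      exact mul_le_mul_of_nonneg_right (by linarith) (hf0 x)
    have h2 : ∫ x in Ici (t + 2 * μ), (x - t) * f x ≤ ∫ x in Ici t, (x - t) * f x := by
      refine setIntegral_mono_set (hxti ht) ?_
        (HasSubset.Subset.eventuallyLE hsub)
      filter_upwards [ae_restrict_mem measurableSet_Ici] with x hx
      have hx' : t ≤ x := hx
      show (0:ℝ) ≤ (x - t) * f x
      exact mul_nonneg (by linarith) (hf0 x)
    have h3 := hmrl ht
    nlinarith [hμpos]
  have hdecay : ∀ n : ℕ, F (2 * μ * n) ≤ (1/2 : ℝ) ^ n := by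
    intro n
    induction n with
    | zero =>
      have e : 2 * μ * ((0:ℕ):ℝ) = 0 := by norm_num
      rw [e, pow_zero]
      exact le_of_eq hF0
    | succ n ih =>
      have e : 2 * μ * ((n + 1 : ℕ):ℝ) = 2 * μ * (n:ℝ) + 2 * μ := by push_cast; ring
      rw [e]
      have hs := hstep (t := 2 * μ * (n:ℝ)) (by positivity)
      calc F (2 * μ * (n:ℝ) + 2 * μ) ≤ F (2 * μ * (n:ℝ)) / 2 := hs
        _ ≤ (1/2:ℝ)^n / 2 := by linarith
        _ = (1/2:ℝ)^(n+1) := by ring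
  -- quantile facts
  have hFa : ∀ j : ℕ, j ≤ K - 1 → F (a j) = 1 - (j:ℝ) / K := by
    intro j hj
    rcases Nat.eq_zero_or_pos j with rfl | hj1
    · rw [ha0]
      have he : ((0:ℕ):ℝ) / K = 0 := by norm_num
      rw [he, sub_zero]
      exact hF0
    · exact (haq j hj1 hj).2
  have hanneg : ∀ j : ℕ, j ≤ K - 1 → 0 ≤ a j := by
    intro j hj
    rcases Nat.eq_zero_or_pos j with rfl | hj1
    · rw [ha0]
    · exact (haq j hj1 hj).1
  have hamono : ∀ j : ℕ, j + 1 ≤ K - 1 → a j ≤ a (j + 1) := by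
    intro j hj
    by_contra hcon
    push_neg at hcon
    have h1 := hFmono (hanneg (j+1) hj) hcon.le
    rw [hFa j (by omega), hFa (j+1) hj] at h1
    push_cast at h1
    have h2 : ((j:ℝ) + 1) / K ≤ (j:ℝ) / K := by linarith
    rw [div_le_div_iff₀ hKpos hKpos] at h2
    nlinarith
  -- the infimum function
  set φ : ℝ → ℝ := fun x => ⨅ i : Fin K, min |a (i:ℕ) - x| |a (i:ℕ) + x| with hφ_def
  have hφnonneg : ∀ x, 0 ≤ φ x :=
    fun x => Real.iInf_nonneg (fun i => le_min (abs_nonneg _) (abs_nonneg _))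
  have hφle : ∀ (j : ℕ), j < K → ∀ x : ℝ, φ x ≤ |a j - x| := by
    intro j hj x
    have h := ciInf_le (f := fun i : Fin K => min |a (i:ℕ) - x| |a (i:ℕ) + x|)
      (Set.Finite.bddBelow (Set.finite_range _)) ⟨j, hj⟩
    exact h.trans (min_le_left _ _)
  have hφm : Measurable φ := by
    refine Measurable.iInf (fun i => Measurable.min ?_ ?_)
    · exact (measurable_const.sub measurable_id).abs
    · exact (measurable_const.add measurable_id).abs
  have hφf_int : IntegrableOn (fun x => φ x * f x) (Ici (0:ℝ)) := by
    refine MeasureTheory.Integrable.mono hxfint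
      (hφm.aestronglyMeasurable.mul hfint.aestronglyMeasurable) ?_
    filter_upwards [ae_restrict_mem measurableSet_Ici] with x hx
    have h0x : (0:ℝ) ≤ x := hx
    have h1 : φ x ≤ x := by
      have h2 := hφle 0 (by omega) x
      rwa [ha0, zero_sub, abs_neg, abs_of_nonneg h0x] at h2
    rw [Real.norm_eq_abs, Real.norm_eq_abs,
      abs_of_nonneg (mul_nonneg (hφnonneg x) (hf0 x)),
      abs_of_nonneg (mul_nonneg h0x (hf0 x))]
    exact mul_le_mul_of_nonneg_right h1 (hf0 x)
  -- splitting of integrals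
  have hsplit : ∀ (ψ : ℝ → ℝ) (c d : ℝ), c ≤ d → IntegrableOn ψ (Ici c) →
      ∫ x in Ici c, ψ x = (∫ x in Ico c d, ψ x) + ∫ x in Ici d, ψ x := by
    intro ψ c d hcd hi
    rw [← Set.Ico_union_Ici_eq_Ici hcd]
    exact setIntegral_union
      (by rw [Set.disjoint_left]; intro x hx hx'; exact absurd hx' (not_le.2 hx.2))
      measurableSet_Ici (hi.mono_set Set.Ico_subset_Ici_self)
      (hi.mono_set (Ici_subset_Ici.2 hcd))
  -- head estimate by induction
  have hhead : ∀ j : ℕ, j ≤ K - 1 →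
      (∫ x in Ici (0:ℝ), φ x * f x) ≤ a j / K + ∫ x in Ici (a j), φ x * f x := by
    intro j
    induction j with
    | zero =>
      intro _
      rw [ha0]
      simp
    | succ n ih =>
      intro hj
      have hn : n ≤ K - 1 := by omega
      have hmono := hamono n hj
      have h0n := hanneg n hn
      have h0n1 := hanneg (n+1) hj
      have hii : IntegrableOn (fun x => φ x * f x) (Ici (a n)) :=
        hφf_int.mono_set (Ici_subset_Ici.2 h0n)
      have hsp := hsplit (fun x => φ x * f x) (a n) (a (n+1)) hmono hii
      have hsp2 := hsplit f (a n) (a (n+1)) hmono (hFint h0n)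
      have hFn := hFa n hn
      have hFn1 := hFa (n+1) hj
      have hIco : ∫ x in Ico (a n) (a (n+1)), f x = 1 / K := by
        have he : F (a n) = (∫ x in Ico (a n) (a (n+1)), f x) + F (a (n+1)) := hsp2
        rw [hFn, hFn1] at he
        push_cast at he
        have hd : ((n:ℝ)+1)/K - (n:ℝ)/K = 1/K := by field_simp; ring
        linarith
      have hIcoBound : ∫ x in Ico (a n) (a (n+1)), φ x * f x ≤ (a (n+1) - a n) / K := by
        have h1 : ∫ x in Ico (a n) (a (n+1)), φ x * f x
            ≤ ∫ x in Ico (a n) (a (n+1)), (a (n+1) - a n) * f x := by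
          refine setIntegral_mono_on (hii.mono_set Set.Ico_subset_Ici_self)
            (((hFint h0n).mono_set Set.Ico_subset_Ici_self).const_mul _)
            measurableSet_Ico ?_
          intro x hx
          have hφx : φ x ≤ x - a n := by
            have h2 := hφle n (by omega) x
            rwa [abs_sub_comm, abs_of_nonneg (sub_nonneg.2 hx.1)] at h2
          have h3 : φ x ≤ a (n+1) - a n := le_trans hφx (by linarith [hx.2.le])
          exact mul_le_mul_of_nonneg_right h3 (hf0 x)
        rw [integral_const_mul, hIco] at h1
        have he : (a (n+1) - a n) * (1 / (K:ℝ)) = (a (n+1) - a n) / K := by ring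
        linarith
      calc ∫ x in Ici (0:ℝ), φ x * f x
          ≤ a n / K + ∫ x in Ici (a n), φ x * f x := ih hn
        _ = a n / K + ((∫ x in Ico (a n) (a (n+1)), φ x * f x)
            + ∫ x in Ici (a (n+1)), φ x * f x) := by rw [hsp]
        _ ≤ a n / K + ((a (n+1) - a n) / K + ∫ x in Ici (a (n+1)), φ x * f x) := by
            linarith
        _ = a (n+1) / K + ∫ x in Ici (a (n+1)), φ x * f x := by ring
  -- the top quantile
  have hbK : K - 1 ≤ K - 1 := le_refl _
  have hbnneg : 0 ≤ a (K-1) := hanneg (K-1) hbK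
  have hKne : (K:ℝ) ≠ 0 := ne_of_gt hKpos
  have hFb : F (a (K-1)) = 1 / K := by
    rw [hFa (K-1) hbK, Nat.cast_sub (by omega : 1 ≤ K)]
    push_cast
    field_simp
    ring
  -- tail estimate
  have htail : ∫ x in Ici (a (K-1)), φ x * f x ≤ μ / K := by
    have h1 : ∫ x in Ici (a (K-1)), φ x * f x
        ≤ ∫ x in Ici (a (K-1)), (x - a (K-1)) * f x := by
      refine setIntegral_mono_on (hφf_int.mono_set (Ici_subset_Ici.2 hbnneg))
        (hxti hbnneg) measurableSet_Ici ?_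
      intro x hx
      have hφx : φ x ≤ x - a (K-1) := by
        have h2 := hφle (K-1) (by omega) x
        rwa [abs_sub_comm, abs_of_nonneg (sub_nonneg.2 (show a (K-1) ≤ x from hx))] at h2
      exact mul_le_mul_of_nonneg_right hφx (hf0 x)
    have h2 := hmrl hbnneg
    rw [hFb] at h2
    calc ∫ x in Ici (a (K-1)), φ x * f x ≤ 1 / (K:ℝ) * μ := h1.trans h2
      _ = μ / K := by ring
  -- bound on the top quantile
  have hl2 : (0:ℝ) < Real.log 2 := Real.log_pos one_lt_two
  have hlK2 : Real.log 2 ≤ Real.log (K:ℝ) := Real.log_le_log two_pos hK2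
  have hlKpos : 0 < Real.log (K:ℝ) := lt_of_lt_of_le hl2 hlK2
  have hblt : a (K-1) ≤ 2 * μ * (Nat.log 2 K + 1 : ℕ) := by
    set n : ℕ := Nat.log 2 K + 1 with hn_def
    by_contra hcon
    push_neg at hcon
    have h1 : F (a (K-1)) ≤ F (2 * μ * (n:ℝ)) := hFmono (by positivity) hcon.le
    have h2 := hdecay n
    rw [hFb] at h1
    have h3 : (1:ℝ)/K ≤ (1/2:ℝ)^n := h1.trans h2
    rw [div_pow, one_pow] at h3
    have h2n : (0:ℝ) < 2^n := by positivity
    rw [div_le_div_iff₀ hKpos h2n] at h3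
    have h4 : ((2:ℝ))^n ≤ K := by linarith
    have h5 : (K:ℝ) < 2^n := by
      have := Nat.lt_pow_succ_log_self (by norm_num : 1 < 2) K
      rw [hn_def]
      exact_mod_cast this
    linarith
  have hnle : ((Nat.log 2 K + 1 : ℕ):ℝ) ≤ 2 * Real.log K / Real.log 2 := by
    have h1 : ((Nat.log 2 K : ℕ):ℝ) * Real.log 2 ≤ Real.log K := by
      have hp : (2:ℝ)^(Nat.log 2 K) ≤ (K:ℝ) := by
        exact_mod_cast Nat.pow_log_le_self 2 (by omega : K ≠ 0)
      calc ((Nat.log 2 K : ℕ):ℝ) * Real.log 2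
          = Real.log ((2:ℝ)^(Nat.log 2 K)) := (Real.log_pow _ _).symm
        _ ≤ Real.log K := Real.log_le_log (by positivity) hp
    have h2 : ((Nat.log 2 K : ℕ):ℝ) ≤ Real.log K / Real.log 2 := by
      rw [le_div_iff₀ hl2]; exact h1
    have h3 : (1:ℝ) ≤ Real.log K / Real.log 2 := by
      rw [le_div_iff₀ hl2]; linarith
    push_cast
    rw [mul_div_assoc]
    linarith
  have hbbound : a (K-1) ≤ 4 * μ * Real.log K / Real.log 2 := by
    calc a (K-1) ≤ 2 * μ * ((Nat.log 2 K + 1 : ℕ):ℝ) := hblt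
      _ ≤ 2 * μ * (2 * Real.log K / Real.log 2) := by
          have := mul_le_mul_of_nonneg_left hnle (by positivity : (0:ℝ) ≤ 2 * μ)
          linarith
      _ = 4 * μ * Real.log K / Real.log 2 := by ring
  -- put it together
  have hmain : ∫ x in Ici (0:ℝ), φ x * f x ≤ a (K-1) / K + μ / K := by
    have h1 := hhead (K-1) hbK
    linarith
  have hμK : μ ≤ μ * Real.log K / Real.log 2 := by
    rw [mul_div_assoc]
    have h3 : (1:ℝ) ≤ Real.log K / Real.log 2 := by
      rw [le_div_iff₀ hl2]; linarith
    calc μ = μ * 1 := (mul_one μ).symm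
      _ ≤ μ * (Real.log K / Real.log 2) := mul_le_mul_of_nonneg_left h3 hμpos.le
  have hl2' : (0.6931471803 : ℝ) < Real.log 2 := Real.log_two_gt_d9
  have htot : a (K-1) + μ ≤ 8 * Real.log K * μ := by
    have h5 : a (K-1) + μ ≤ 5 * μ * Real.log K / Real.log 2 := by
      rw [show (5:ℝ) * μ * Real.log K / Real.log 2
        = 4 * μ * Real.log K / Real.log 2 + μ * Real.log K / Real.log 2 by ring]
      linarith
    have h6 : 5 * μ * Real.log K / Real.log 2 ≤ 8 * Real.log K * μ := by
      rw [div_le_iff₀ hl2]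
      have hml : 0 ≤ μ * Real.log K := mul_nonneg hμpos.le hlKpos.le
      nlinarith [hml, hl2']
    linarith
  have hfinal : a (K-1) / K + μ / K ≤ 8 * Real.log K / (K * ε) := by
    have he : 8 * Real.log K / ((K:ℝ) * ε) = (8 * Real.log K * μ) / K := by
      rw [hμε]
      field_simp
    rw [he]
    calc a (K-1) / K + μ / K = (a (K-1) + μ) / K := by ring
      _ ≤ (8 * Real.log K * μ) / K := by
          exact div_le_div_of_nonneg_right htot hKpos.le
  exact hmain.trans hfinal

end
end
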